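/- arXiv:2604.00042 — 3 statements merged into one kernel-verified Lean document; each statement's English description precedes it below -/
import Mathlib

section
/- (Koopman–von Neumann lemma, one direction) Let (a_n) be a bounded sequence of nonnegative real numbers. If (1/n) ∑_{j=0}^{n-1} a_j → 0, then there exists a set D ⊆ ℕ of density zero such that a_n → 0 as n → ∞ along the complement of D. -/
open Filter Finset Topology

/-- A set `D ⊆ ℕ` has density zero if `#(D ∩ {0,…,n-1})/n → 0`. -/
def DensityZero (D : Set ℕ) : Prop :=
  Tendsto (fun n : ℕ => (∑ j ∈ Finset.range n, Set.indicator D (fun _ => (1 : ℝ)) j) / n)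
    atTop (𝓝 0)

/-!
By Markov's inequality each level set `{m | 1/(k+1) ≤ a m}` has density zero. These sets increase
with `k`, and a diagonal argument produces one set `D` of density zero that contains each of them
up to finitely many elements; off `D` the sequence is eventually below every `1/(k+1)`.
-/

theorem exists_monotone_tendsto_diagonal {α : Type*} [PseudoMetricSpace α] (u : ℕ → ℕ → α)
    (x : α) (hu : ∀ k, Tendsto (u k) atTop (𝓝 x)) :
    ∃ φ : ℕ → ℕ, Monotone φ ∧ Tendsto φ atTop atTop ∧
      Tendsto (fun n => u (φ n) n) atTop (𝓝 x) := by
  classical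
  -- `B k` is a threshold beyond which `u k` stays within `1/(k+1)` of `x`;
  -- `φ n` is the last `k` whose threshold has been passed at time `n`.
  obtain ⟨B, hB, hBu⟩ : ∃ B : ℕ → ℕ, StrictMono B ∧
      ∀ k, ∀ n ≥ B k, dist (u k n) x < 1 / ((k : ℝ) + 1) := by
    refine extraction_forall_of_eventually'
      (P := fun k m => ∀ n ≥ m, dist (u k n) x < 1 / ((k : ℝ) + 1)) fun k => ?_
    obtain ⟨N, hN⟩ := Metric.tendsto_atTop.1 (hu k) _ Nat.one_div_pos_of_nat
    exact ⟨N, fun m hm n hn => hN n (hm.trans hn)⟩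
  set φ : ℕ → ℕ := fun n => Nat.findGreatest (fun k => B k ≤ n) n
  have le_φ : ∀ {k n}, B k ≤ n → k ≤ φ n := fun h =>
    Nat.le_findGreatest ((hB.id_le _).trans h) h
  have B_φ_le : ∀ {n}, B 0 ≤ n → B (φ n) ≤ n := fun h =>
    Nat.findGreatest_spec (P := fun k => B k ≤ _) (Nat.zero_le _) h
  refine ⟨φ, fun i j hij => Nat.findGreatest_mono (fun k hk => hk.trans hij) hij,
    tendsto_atTop.2 fun k => eventually_atTop.2 ⟨B k, fun n => le_φ⟩, ?_⟩
  refine Metric.tendsto_atTop.2 fun ε hε => ?_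
  obtain ⟨k, hk⟩ := exists_nat_one_div_lt hε
  refine ⟨B k, fun n hn => ?_⟩
  calc dist (u (φ n) n) x < 1 / ((φ n : ℝ) + 1) :=
        hBu _ _ (B_φ_le ((hB.monotone k.zero_le).trans hn))
    _ ≤ 1 / ((k : ℝ) + 1) := Nat.one_div_le_one_div (le_φ hn)
    _ < ε := hk

theorem densityZero_of_le {D : Set ℕ} {f : ℕ → ℝ} (hf : Tendsto f atTop (𝓝 0))
    (hle : ∀ n, (∑ j ∈ range n, Set.indicator D (fun _ => (1 : ℝ)) j) / n ≤ f n) :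
    DensityZero D :=
  squeeze_zero (fun n => div_nonneg (sum_nonneg fun j _ =>
    Set.indicator_nonneg (fun _ _ => zero_le_one) j) n.cast_nonneg) hle hf

theorem densityZero_setOf_le {a : ℕ → ℝ} (hnonneg : ∀ n, 0 ≤ a n)
    (hces : Tendsto (fun n : ℕ => (∑ j ∈ Finset.range n, a j) / n) atTop (𝓝 0))
    {δ : ℝ} (hδ : 0 < δ) : DensityZero {m | δ ≤ a m} := by
  refine densityZero_of_le (by simpa using hces.const_mul δ⁻¹) fun n => ?_
  rw [← mul_div_assoc, mul_sum]
  gcongr with j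
  by_cases hj : j ∈ {m | δ ≤ a m}
  · rw [Set.indicator_of_mem hj, le_inv_mul_iff₀ hδ, mul_one]
    exact hj
  · rw [Set.indicator_of_notMem hj]
    exact mul_nonneg (inv_nonneg.2 hδ.le) (hnonneg j)

theorem exists_densityZero_eventually_subset {E : ℕ → Set ℕ} (hE : Monotone E)
    (h : ∀ k, DensityZero (E k)) :
    ∃ D : Set ℕ, DensityZero D ∧ ∀ k, ∀ᶠ n in atTop, n ∈ E k → n ∈ D := by
  obtain ⟨φ, hφ, hφ_top, hφ_lim⟩ := exists_monotone_tendsto_diagonal _ _ h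
  refine ⟨{n | n ∈ E (φ n)}, densityZero_of_le hφ_lim fun n => ?_,
    fun k => (tendsto_atTop.1 hφ_top k).mono fun n hn hnk => hE hn hnk⟩
  refine div_le_div_of_nonneg_right (sum_le_sum fun j hj => ?_) n.cast_nonneg
  exact Set.indicator_le_indicator_of_subset (fun m hm => hE (hφ (mem_range.1 hj).le) hm)
    (fun _ => zero_le_one) j

theorem koopman_von_neumann_general (a : ℕ → ℝ)
    (hnonneg : ∀ n, 0 ≤ a n)
    (hces : Tendsto (fun n : ℕ => (∑ j ∈ Finset.range n, a j) / n) atTop (𝓝 0)) :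
    ∃ D : Set ℕ, DensityZero D ∧
      ∀ ε > (0 : ℝ), ∃ N : ℕ, ∀ n ≥ N, n ∉ D → a n < ε := by
  have hmono : Monotone fun k : ℕ => {m | 1 / ((k : ℝ) + 1) ≤ a m} :=
    fun k l hkl => Set.ofPred_subset_ofPred.2 fun m => (Nat.one_div_le_one_div hkl).trans
  obtain ⟨D, hD, hED⟩ := exists_densityZero_eventually_subset hmono
    fun k => densityZero_setOf_le hnonneg hces Nat.one_div_pos_of_nat
  refine ⟨D, hD, fun ε hε => ?_⟩
  obtain ⟨k, hk⟩ := exists_nat_one_div_lt hε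
  obtain ⟨N, hN⟩ := eventually_atTop.1 (hED k)
  refine ⟨N, fun n hn hnD => ?_⟩
  exact (not_le.1 fun hnk => hnD (hN n hn hnk)).trans hk

theorem koopman_von_neumann (a : ℕ → ℝ) (M : ℝ) (hbdd : ∀ n, a n ≤ M)
    (hnonneg : ∀ n, 0 ≤ a n)
    (hces : Tendsto (fun n : ℕ => (∑ j ∈ Finset.range n, a j) / n) atTop (𝓝 0)) :
    ∃ D : Set ℕ, DensityZero D ∧
      ∀ ε > (0 : ℝ), ∃ N : ℕ, ∀ n ≥ N, n ∉ D → a n < ε :=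
  koopman_von_neumann_general a hnonneg hces
end

section
/- (Koopman–von Neumann lemma, converse direction) Let (a_n) be a bounded sequence of nonnegative real numbers. If there exists a density zero set D ⊆ ℕ such that a_n → 0 along the complement of D, then (1/n) ∑_{j=0}^{n-1} a_j → 0. -/
open Filter Finset Topology

/-!
Split `a = D.indicator a + Dᶜ.indicator a`. The second part tends to `0`, so its Cesàro means
do too. The first part is dominated by `M` times the indicator of `D`, whose Cesàro means tend to
`0` because `D` has density zero.
-/

theorem tendsto_indicator_compl_of_forall_lt {a : ℕ → ℝ} (ha : ∀ n, 0 ≤ a n) {D : Set ℕ}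
    (h : ∀ ε > (0 : ℝ), ∃ N : ℕ, ∀ n ≥ N, n ∉ D → a n < ε) :
    Tendsto (Dᶜ.indicator a) atTop (𝓝 0) := by
  rw [Metric.tendsto_atTop]
  intro ε hε
  obtain ⟨N, hN⟩ := h ε hε
  refine ⟨N, fun n hn => ?_⟩
  by_cases hnD : n ∈ D
  · simpa [Set.indicator_of_notMem (Set.notMem_compl_iff.mpr hnD)] using hε
  · rw [Set.indicator_of_mem (Set.mem_compl hnD), Real.dist_0_eq_abs, abs_of_nonneg (ha n)]
    exact hN n hn hnD

theorem Filter.Tendsto.cesaro_div {u : ℕ → ℝ} {l : ℝ} (h : Tendsto u atTop (𝓝 l)) :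
    Tendsto (fun n : ℕ => (∑ i ∈ range n, u i) / n) atTop (𝓝 l) := by
  simpa only [inv_mul_eq_div] using h.cesaro

theorem DensityZero.tendsto_avg_indicator {D : Set ℕ} (hD : DensityZero D) {a : ℕ → ℝ} {M : ℝ}
    (ha : ∀ n, 0 ≤ a n) (haM : ∀ n, a n ≤ M) :
    Tendsto (fun n : ℕ => (∑ j ∈ range n, D.indicator a j) / n) atTop (𝓝 0) := by
  have hbound : ∀ n : ℕ, (∑ j ∈ range n, D.indicator a j) / n ≤
      M * ((∑ j ∈ range n, D.indicator (fun _ => (1 : ℝ)) j) / n) := fun n => by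
    rw [mul_div_assoc', mul_sum]
    gcongr with j
    by_cases hj : j ∈ D <;> simp [hj, haM]
  refine tendsto_of_tendsto_of_tendsto_of_le_of_le tendsto_const_nhds
    (by simpa using hD.const_mul M) (fun n => ?_) hbound
  exact div_nonneg (sum_nonneg fun j _ => Set.indicator_nonneg (fun j _ => ha j) j) n.cast_nonneg

theorem koopman_von_neumann_converse (a : ℕ → ℝ) (M : ℝ)
    (hbdd : ∀ n, 0 ≤ a n ∧ a n ≤ M)
    (D : Set ℕ) (hD : DensityZero D)
    (hconv : ∀ ε > (0 : ℝ), ∃ N : ℕ, ∀ n ≥ N, n ∉ D → a n < ε) :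
    Tendsto (fun n : ℕ => (∑ j ∈ Finset.range n, a j) / n) atTop (𝓝 0) := by
  have hD_part := hD.tendsto_avg_indicator (fun n => (hbdd n).1) (fun n => (hbdd n).2)
  have hDc_part := (tendsto_indicator_compl_of_forall_lt (fun n => (hbdd n).1) hconv).cesaro_div
  simpa only [← add_div, ← sum_add_distrib, Set.indicator_self_add_compl_apply, add_zero]
    using hD_part.add hDc_part
end

section
/- Let (X, μ) be a probability space, d ≥ 1, and let w_1, …, w_d : X → X be measurable branch maps of a correspondence F such that the Birkhoff-type averages converge: for μ-a.e. z, (1/n) ∑_{j=0}^{n-1} (1/d^j) ∑_{w ∈ (F^j)†(z)} χ_A(w) → μ(A). Let B be measurable. Then lim inf over n of (1/n) ∑_{j=0}^{n-1} μ(F^j(A) ∩ B) ≥ μ(A)μ(B), using that the normalized preimage sum (1/d^j) ∑_{w ∈ (F^j)†(z)} χ_A(w) is bounded by 1 and supported on F^j(A) ∩ (whole space), i.e., pointwise (1/d^j) ∑_{w ∈ (F^j)†(z)} χ_A(w) · χ_B(z) ≤ χ_{F^j(A) ∩ B}(z). -/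
open MeasureTheory Filter Finset Topology

/-!
Integrating `g j * χ_B ≤ χ_{E j}` and averaging over `j < n` gives
`∫ (Cesàro mean of g) * χ_B ≤ Cesàro mean of μ (E j)`. The integrands on the left are bounded
by `1` and converge a.e. to `α * χ_B`, so by bounded convergence the left side tends to
`α * μ B`, which therefore bounds the liminf of the right side (itself bounded by `1`).
-/

theorem Filter.Tendsto.le_liminf_of_eventuallyLE {β α : Type*}
    [ConditionallyCompleteLinearOrder α] [TopologicalSpace α] [OrderTopology α]
    {f : Filter β} [f.NeBot] {u v : β → α} {a : α} (hu : Tendsto u f (𝓝 a))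
    (huv : u ≤ᶠ[f] v) (hv : IsBoundedUnder (· ≤ ·) f v) : a ≤ liminf v f :=
  hu.liminf_eq ▸ liminf_le_liminf huv hu.isBoundedUnder_ge hv.isCoboundedUnder_ge

theorem cesaro_mean_nonneg {a : ℕ → ℝ} (ha : ∀ j, 0 ≤ a j) (n : ℕ) :
    0 ≤ (∑ j ∈ range n, a j) / n :=
  div_nonneg (sum_nonneg fun j _ => ha j) n.cast_nonneg

theorem cesaro_mean_le_one {a : ℕ → ℝ} (ha : ∀ j, a j ≤ 1) (n : ℕ) :
    (∑ j ∈ range n, a j) / n ≤ 1 := by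
  refine div_le_one_of_le₀ ?_ n.cast_nonneg
  simpa using sum_le_card_nsmul (range n) a 1 fun j _ => ha j

theorem MeasureTheory.tendsto_integral_of_norm_le_const {X E : Type*} [MeasurableSpace X]
    [NormedAddCommGroup E] [NormedSpace ℝ E] {μ : Measure X} [IsFiniteMeasure μ]
    {F : ℕ → X → E} {f : X → E} (C : ℝ) (hF : ∀ n, AEStronglyMeasurable (F n) μ)
    (hC : ∀ n, ∀ᵐ x ∂μ, ‖F n x‖ ≤ C) (hlim : ∀ᵐ x ∂μ, Tendsto (F · x) atTop (𝓝 (f x))) :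
    Tendsto (fun n => ∫ x, F n x ∂μ) atTop (𝓝 (∫ x, f x ∂μ)) :=
  tendsto_integral_of_dominated_convergence (fun _ => C) hF (integrable_const C) hC hlim

theorem MeasureTheory.integral_cesaro_mean_indicator_one {X : Type*} [MeasurableSpace X]
    {μ : Measure X} [IsFiniteMeasure μ] {E : ℕ → Set X} (hE : ∀ j, MeasurableSet (E j))
    (n : ℕ) :
    ∫ z, (∑ j ∈ range n, (E j).indicator (fun _ => (1 : ℝ)) z) / n ∂μ =
      (∑ j ∈ range n, μ.real (E j)) / n := by
  have hint : ∀ j ∈ range n, Integrable ((E j).indicator fun _ => (1 : ℝ)) μ :=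
    fun j _ => (integrable_const 1).indicator (hE j)
  rw [integral_div, integral_finsetSum _ hint]
  exact congrArg (· / (n : ℝ)) (sum_congr rfl fun j _ => integral_indicator_one (hE j))

theorem liminf_cesaro_measure_ge_general {X : Type*} [MeasurableSpace X]
    (μ : Measure X) [IsProbabilityMeasure μ]
    (g : ℕ → X → ℝ) (hgmeas : ∀ j, Measurable (g j))
    (hg01 : ∀ j x, 0 ≤ g j x ∧ g j x ≤ 1)
    (E : ℕ → Set X) (hE : ∀ j, MeasurableSet (E j))
    (B : Set X) (hB : MeasurableSet B)
    (hsupp : ∀ j x, g j x * Set.indicator B (fun _ => (1 : ℝ)) x ≤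
      Set.indicator (E j) (fun _ => (1 : ℝ)) x)
    (α : ℝ)
    (hconv : ∀ᵐ z ∂μ,
      Tendsto (fun n : ℕ => (∑ j ∈ Finset.range n, g j z) / n) atTop (𝓝 α)) :
    α * (μ B).toReal ≤
      Filter.liminf (fun n : ℕ => (∑ j ∈ Finset.range n, (μ (E j)).toReal) / n) atTop := by
  set χB : X → ℝ := B.indicator fun _ => 1
  set f : ℕ → X → ℝ := fun n z => (∑ j ∈ range n, g j z) / n * χB z
  have hχB : ∀ z, 0 ≤ χB z ∧ χB z ≤ 1 := fun z => by
    by_cases h : z ∈ B <;> simp [χB, h]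
  have hf_meas : ∀ n, Measurable (f n) := fun n =>
    ((Finset.measurable_sum _ fun j _ => hgmeas j).div_const _).mul
      (measurable_const.indicator hB)
  have hf_bound : ∀ n z, ‖f n z‖ ≤ 1 := fun n z => by
    rw [Real.norm_of_nonneg (mul_nonneg (cesaro_mean_nonneg (hg01 · z |>.1) n) (hχB z).1)]
    exact mul_le_one₀ (cesaro_mean_le_one (hg01 · z |>.2) n) (hχB z).1 (hχB z).2
  have hf_lim : Tendsto (fun n => ∫ z, f n z ∂μ) atTop (𝓝 (α * μ.real B)) := by
    rw [← integral_indicator_one hB, ← integral_const_mul]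
    exact tendsto_integral_of_norm_le_const 1 (fun n => (hf_meas n).aestronglyMeasurable)
      (fun n => ae_of_all _ (hf_bound n)) (hconv.mono fun z hz => hz.mul_const _)
  have hf_le : ∀ n, ∫ z, f n z ∂μ ≤ (∑ j ∈ range n, μ.real (E j)) / n := fun n => by
    rw [← integral_cesaro_mean_indicator_one hE]
    refine integral_mono ((integrable_const 1).mono' (hf_meas n).aestronglyMeasurable
      (ae_of_all _ (hf_bound n))) ?_ fun z => ?_
    · exact (integrable_finsetSum _ fun j _ => (integrable_const 1).indicator (hE j)).div_const _
    · simp only [f, div_mul_eq_mul_div, sum_mul]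
      gcongr with j
      exact hsupp j z
  exact hf_lim.le_liminf_of_eventuallyLE (Eventually.of_forall hf_le)
    (isBoundedUnder_of ⟨1, fun n => cesaro_mean_le_one (fun j => measureReal_le_one) n⟩)

theorem liminf_cesaro_measure_ge {X : Type*} [MeasurableSpace X]
    (μ : Measure X) [IsProbabilityMeasure μ]
    (g : ℕ → X → ℝ) (hgmeas : ∀ j, Measurable (g j))
    (hg01 : ∀ j x, 0 ≤ g j x ∧ g j x ≤ 1)
    (E : ℕ → Set X) (hE : ∀ j, MeasurableSet (E j))
    (B : Set X) (hB : MeasurableSet B)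
    (hsupp : ∀ j x, g j x * Set.indicator B (fun _ => (1 : ℝ)) x ≤
      Set.indicator (E j) (fun _ => (1 : ℝ)) x)
    (α : ℝ) (hα : 0 ≤ α)
    (hconv : ∀ᵐ z ∂μ,
      Tendsto (fun n : ℕ => (∑ j ∈ Finset.range n, g j z) / n) atTop (𝓝 α)) :
    α * (μ B).toReal ≤
      Filter.liminf (fun n : ℕ => (∑ j ∈ Finset.range n, (μ (E j)).toReal) / n) atTop :=
  liminf_cesaro_measure_ge_general μ g hgmeas hg01 E hE B hB hsupp α hconv
end
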